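/- Let $(H,\sigma)$ be a vertex-colored graph whose vertex set consists of $n$ vertices $v_1,\dots,v_n$ that are pairwise adjacent and carry $n$ pairwise distinct colors, together with finitely many additional isolated vertices, each colored with one of the colors $\sigma(v_1),\dots,\sigma(v_n)$. Then $(H,\sigma)$ is an hc-cograph. -/

import Mathlib

namespace RBMGPaper

variable {V : Type*} {C : Type*}

/-- `HCOn G σ A` asserts that the subgraph of the vertex-colored graph `(G, σ)` induced on the
vertex set `A` is a hierarchically colored cograph, built recursively via (K1)–(K3). -/
inductive HCOn (G : SimpleGraph V) (σ : V → C) : Set V → Prop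
  | single (v : V) : HCOn G σ {v}
  | join (A B : Set V) (hA : A.Nonempty) (hB : B.Nonempty) (hdisj : Disjoint A B)
      (hadj : ∀ a ∈ A, ∀ b ∈ B, G.Adj a b)
      (hcol : Disjoint (σ '' A) (σ '' B))
      (h1 : HCOn G σ A) (h2 : HCOn G σ B) : HCOn G σ (A ∪ B)
  | union (A B : Set V) (hA : A.Nonempty) (hB : B.Nonempty) (hdisj : Disjoint A B)
      (hadj : ∀ a ∈ A, ∀ b ∈ B, ¬ G.Adj a b)
      (hcol : σ '' A ⊆ σ '' B ∨ σ '' B ⊆ σ '' A)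
      (h1 : HCOn G σ A) (h2 : HCOn G σ B) : HCOn G σ (A ∪ B)

/-- `(G, σ)` is a hierarchically colored cograph (hc-cograph). -/
def IsHCCograph (G : SimpleGraph V) (σ : V → C) : Prop :=
  HCOn G σ Set.univ

/-- `CographOn G A` asserts that the subgraph of `G` induced on `A` is a cograph. -/
inductive CographOn (G : SimpleGraph V) : Set V → Prop
  | single (v : V) : CographOn G {v}
  | union (A B : Set V) (hA : A.Nonempty) (hB : B.Nonempty) (hdisj : Disjoint A B)
      (hadj : ∀ a ∈ A, ∀ b ∈ B, ¬ G.Adj a b)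
      (h1 : CographOn G A) (h2 : CographOn G B) : CographOn G (A ∪ B)
  | join (A B : Set V) (hA : A.Nonempty) (hB : B.Nonempty) (hdisj : Disjoint A B)
      (hadj : ∀ a ∈ A, ∀ b ∈ B, G.Adj a b)
      (h1 : CographOn G A) (h2 : CographOn G B) : CographOn G (A ∪ B)

/-- `G` is a cograph. -/
def IsCograph (G : SimpleGraph V) : Prop := CographOn G Set.univ

/-- The set `s` induces a biclique (complete bipartite graph, possibly `K₁`) in `G`. -/
def IsBiclique (G : SimpleGraph V) (s : Set V) : Prop :=
  ∃ A B : Set V, s = A ∪ B ∧ Disjoint A B ∧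
    ∀ u ∈ s, ∀ v ∈ s, (G.Adj u v ↔ ((u ∈ A ∧ v ∈ B) ∨ (u ∈ B ∧ v ∈ A)))

/-- `G` is a bicluster graph: every connected component is a biclique. -/
def IsBiclusterGraph (G : SimpleGraph V) : Prop :=
  ∀ c : G.ConnectedComponent, IsBiclique G c.supp

/-- `addHub G` is the graph `G + x`: a new vertex (`none`) adjacent to all vertices of `G`. -/
def addHub (G : SimpleGraph V) : SimpleGraph (Option V) where
  Adj u v :=
    (∃ a b, u = some a ∧ v = some b ∧ G.Adj a b) ∨
    (u = none ∧ ∃ b, v = some b) ∨ ((∃ a, u = some a) ∧ v = none)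
  symm := by
    refine ⟨?_⟩
    rintro u v (⟨a, b, rfl, rfl, h⟩ | ⟨rfl, b, rfl⟩ | ⟨⟨a, rfl⟩, rfl⟩)
    · exact Or.inl ⟨b, a, rfl, rfl, h.symm⟩
    · exact Or.inr (Or.inr ⟨⟨b, rfl⟩, rfl⟩)
    · exact Or.inr (Or.inl ⟨rfl, a, rfl⟩)
  loopless := by
    refine ⟨?_⟩
    rintro u (⟨a, b, rfl, hb, h⟩ | ⟨rfl, b, hb⟩ | ⟨⟨a, rfl⟩, hb⟩)
    · exact G.irrefl (Option.some_injective V hb ▸ h)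
    · exact nomatch hb
    · exact nomatch hb

/-
A clique with pairwise distinct colors is an hc-cograph: add its vertices one at a time by (K2),
the new vertex being adjacent to all previous ones and carrying a new color. The isolated vertices
are then added one at a time by (K3): each is non-adjacent to everything, and its color already
occurs on the clique, so the color set of the new singleton is contained in that of the rest.
-/

namespace HCOn

variable {G : SimpleGraph V} {σ : V → C} {s : Set V} {a : V}

theorem nonempty (h : HCOn G σ s) : s.Nonempty := by
  cases h with
  | single v => exact Set.singleton_nonempty v
  | join A B hA => exact hA.mono Set.subset_union_left
  | union A B hA => exact hA.mono Set.subset_union_left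

theorem insert_of_adj (h : HCOn G σ s) (hadj : ∀ b ∈ s, G.Adj a b) (hcol : σ a ∉ σ '' s) :
    HCOn G σ (insert a s) := by
  have has : a ∉ s := fun ha ↦ hcol (Set.mem_image_of_mem σ ha)
  rw [Set.insert_eq]
  refine .join {a} s (Set.singleton_nonempty a) h.nonempty (Set.disjoint_singleton_left.2 has)
    ?_ ?_ (.single a) h
  · simpa using hadj
  · simpa using hcol

theorem insert_of_isolated (h : HCOn G σ s) (hadj : ∀ b ∈ s, ¬ G.Adj a b)
    (hcol : σ a ∈ σ '' s) : HCOn G σ (insert a s) := by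
  by_cases has : a ∈ s
  · rwa [Set.insert_eq_of_mem has]
  rw [Set.insert_eq]
  refine .union {a} s (Set.singleton_nonempty a) h.nonempty (Set.disjoint_singleton_left.2 has)
    ?_ (.inl ?_) (.single a) h
  · simpa using hadj
  · simpa using hcol

theorem of_isClique (hs : s.Finite) (hne : s.Nonempty) (hclique : G.IsClique s)
    (hinj : Set.InjOn σ s) : HCOn G σ s := by
  induction s, hs using Set.Finite.induction_on with
  | empty => exact absurd hne Set.not_nonempty_empty
  | @insert a s has _ ih =>
    obtain rfl | hsne := s.eq_empty_or_nonempty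
    · rw [insert_empty_eq]
      exact .single a
    rw [SimpleGraph.isClique_insert] at hclique
    rw [Set.injOn_insert has] at hinj
    exact (ih hsne hclique.1 hinj.1).insert_of_adj
      (fun b hb ↦ hclique.2 b hb (ne_of_mem_of_not_mem hb has).symm) hinj.2

theorem union_of_isolated (h : HCOn G σ s) {t : Set V} (ht : t.Finite)
    (hiso : ∀ v ∈ t, ∀ u, ¬ G.Adj v u) (hcol : ∀ v ∈ t, σ v ∈ σ '' s) : HCOn G σ (s ∪ t) := by
  induction t, ht using Set.Finite.induction_on with
  | empty => rwa [Set.union_empty]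
  | @insert a t _ _ ih =>
    rw [Set.union_insert]
    refine (ih (fun v hv ↦ hiso v (.inr hv)) (fun v hv ↦ hcol v (.inr hv))).insert_of_isolated
      (fun b _ ↦ hiso a (.inl rfl) b) (Set.image_mono Set.subset_union_left (hcol a (.inl rfl)))

end HCOn

/-- Let `(H, σ)` consist of a nonempty set `K` of pairwise adjacent vertices
carrying pairwise distinct colors, together with finitely many further isolated vertices, each
colored with a color already occurring on `K`.  Then `(H, σ)` is an hc-cograph. -/
theorem clique_plus_isolated_isHCCograph [Fintype V] (H : SimpleGraph V) (σ : V → C)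
    (K : Set V) (hKne : K.Nonempty)
    (hadj : ∀ u ∈ K, ∀ v ∈ K, u ≠ v → H.Adj u v)
    (hinj : Set.InjOn σ K)
    (hiso : ∀ v ∉ K, ∀ u : V, ¬ H.Adj v u)
    (hcol : ∀ v : V, σ v ∈ σ '' K) :
    IsHCCograph H σ := by
  have hK : HCOn H σ K := .of_isClique K.toFinite hKne hadj hinj
  have hall := hK.union_of_isolated Kᶜ.toFinite hiso (fun v _ ↦ hcol v)
  rwa [Set.union_compl_self] at hall

end RBMGPaper
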